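/- Let k ≥ 1, T ∈ Tab(1,k) and a ∈ ℂ∖{0}. The monomial m^{(1)}_{T,a} is dominant (all its exponents are ≥ 0) if and only if T = (1,1,…,1), in which case m^{(1)}_{T,a} = ∏_{p=1}^{k} Z_{1,aq^{2(p−1)}}. Consequently the sum Σ_{T∈Tab(1,k)} m^{(1)}_{T,a} ∈ ℤ[G] has a unique dominant monomial, occurring with coefficient 1 (the Kirillov–Reshetikhin module W^{(1)}_{k,a} of type D_4^{(3)} is special). -/

import Mathlib

/-!
Cubing the spectral parameter of every `Z_{1,b}` kills the powers of `j`, so after this folding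
every variable has the form `Z_{i,a³qⁿ}`; as `q` is not a root of unity, the folded monomial is a
function of `(i, n)`, and a negative exponent after folding forces one before.

After folding, the box in column `p` occupies heights `6p, …, 6p + 18`. Its positive variables lie
strictly below `6p + 2·rank(T_p) + 3`, and unless `T_p = 1` it has a negative variable at or above
that height. For the last column this negative variable cannot be cancelled, since the earlier
columns have smaller `p` and, by monotonicity of the tableau, no larger rank.
-/

noncomputable section

/-- The set `B = {1,2,3,4,4̄,3̄,2̄,1̄}`. -/
inductive BB : Type
  | b1 | b2 | b3 | b4 | b4' | b3' | b2' | b1'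
  deriving DecidableEq

instance instFintypeBB : Fintype BB :=
  ⟨{.b1, .b2, .b3, .b4, .b4', .b3', .b2', .b1'}, fun x => by cases x <;> decide⟩

/-- The rank used to define the partial order on `B`
(`4` and `4̄` get the same rank, making them incomparable). -/
def BB.rank : BB → ℕ
  | .b1 => 0 | .b2 => 1 | .b3 => 2 | .b4 => 3 | .b4' => 3
  | .b3' => 4 | .b2' => 5 | .b1' => 6

/-- The partial order `⪯` on `B` : `1 ≺ 2 ≺ 3 ≺ 4 ≺ 3̄ ≺ 2̄ ≺ 1̄` and `3 ≺ 4̄ ≺ 3̄`,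
with `4` and `4̄` incomparable. -/
def BB.le (x y : BB) : Prop := x = y ∨ x.rank < y.rank

/-- The strict order `≺` on `B`. -/
def BB.lt (x y : BB) : Prop := x.rank < y.rank

/-- Monomials: the free abelian group on `{1,2} × ℂˣ`, written additively;
`Finsupp.single (i,b) 1` corresponds to the generator `Z_{i+1,b}`. -/
abbrev Mon2 : Type := (Fin 2 × ℂˣ) →₀ ℤ

/-- The group ring `ℤ[G]`. -/
abbrev LR2 : Type := AddMonoidAlgebra ℤ Mon2

/-- The generator `Z_{i,b}` (with `i : Fin 2` indexing `{1,2}`). -/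
def Zv (i : Fin 2) (b : ℂˣ) : Mon2 := Finsupp.single (i, b) 1

/-- `j = e^{2iπ/3}`, a primitive cube root of unity, as a unit of `ℂ`. -/
def jC : ℂˣ := Units.mk0 (Complex.exp (2 * Real.pi * Complex.I / 3)) (Complex.exp_ne_zero _)

/-- The boxes `⟦α⟧_a ∈ G` for `α ∈ B` (written additively). -/
def box (q : ℂˣ) : BB → ℂˣ → Mon2
  | .b1, a => Zv 0 a
  | .b2, a => -Zv 0 (a * q ^ 2) + Zv 1 (a ^ 3 * q ^ 3)
  | .b3, a => -Zv 1 (a ^ 3 * q ^ 9) + Zv 0 (a * q ^ 2 * jC) + Zv 0 (a * q ^ 2 * jC ^ 2)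
  | .b4, a => Zv 0 (a * q ^ 2 * jC) - Zv 0 (a * q ^ 4 * jC ^ 2)
  | .b4', a => Zv 0 (a * q ^ 2 * jC ^ 2) - Zv 0 (a * q ^ 4 * jC)
  | .b3', a => -Zv 0 (a * q ^ 4 * jC) - Zv 0 (a * q ^ 4 * jC ^ 2) + Zv 1 (a ^ 3 * q ^ 9)
  | .b2', a => Zv 0 (a * q ^ 4) - Zv 1 (a ^ 3 * q ^ 15)
  | .b1', a => -Zv 0 (a * q ^ 6)

/-- `Tab(1,k)`: sequences `(T_1,…,T_k)` in `B` with `T_p ⪯ T_{p+1}`. -/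
def IsTab1 (k : ℕ) (T : Fin k → BB) : Prop :=
  ∀ (p : ℕ) (h : p + 1 < k), BB.le (T ⟨p, Nat.lt_of_succ_lt h⟩) (T ⟨p + 1, h⟩)

/-- The monomial `m^{(1)}_{T,a} = ∏_{p=1}^{k} ⟦T_p⟧_{aq^{2(p-1)}}` (written additively). -/
def m1 (q : ℂˣ) {k : ℕ} (T : Fin k → BB) (a : ℂˣ) : Mon2 :=
  ∑ p : Fin k, box q (T p) (a * q ^ (2 * (p : ℕ)))

/-- `Tab(2,k)`: two-row arrays with entries in `B` satisfying (θ1)–(θ4).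
Row `i : Fin 2` corresponds to row `i+1` of the paper. -/
def IsTab2 (k : ℕ) (T : Fin 2 → Fin k → BB) : Prop :=
  (∀ i : Fin 2, IsTab1 k (T i)) ∧
  (∀ p : Fin k, ¬ BB.le (T 1 p) (T 0 p)) ∧
  (¬ ∃ p p' : Fin k, p < p' ∧
      (∀ r : Fin k, p ≤ r → r < p' → T 0 r = BB.b3) ∧ T 0 p' = BB.b4 ∧
      T 1 p = BB.b4 ∧ (∀ r : Fin k, p < r → r ≤ p' → T 1 r = BB.b3')) ∧
  (¬ ∃ p p' : Fin k, p < p' ∧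
      (∀ r : Fin k, p ≤ r → r < p' → T 0 r = BB.b3) ∧ T 0 p' = BB.b4' ∧
      T 1 p = BB.b4' ∧ (∀ r : Fin k, p < r → r ≤ p' → T 1 r = BB.b3'))

/-- The monomial `m^{(2)}_{T,a} = ∏_{i∈{1,2}} ∏_{p=1}^{k} ⟦T_{i,p}⟧_{aq^{2(p-i)}}`
(written additively; rows and columns are 0-indexed). -/
def m2 (q : ℂˣ) {k : ℕ} (T : Fin 2 → Fin k → BB) (a : ℂˣ) : Mon2 :=
  ∑ i : Fin 2, ∑ p : Fin k, box q (T i p) (a * q ^ (2 * ((p : ℤ) - (i : ℤ))))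

open Classical in
/-- `S¹_k(a) = Σ_{T ∈ Tab(1,k)} m^{(1)}_{T,a}` in the group ring `ℤ[G]`. -/
def S1 (q : ℂˣ) (k : ℕ) (a : ℂˣ) : LR2 :=
  ∑ T : Fin k → BB, if IsTab1 k T then AddMonoidAlgebra.single (m1 q T a) 1 else 0

open Finsupp

theorem Finsupp.mapDomain_neg {α β M : Type*} [AddCommGroup M] {f : α → β} (v : α →₀ M) :
    mapDomain f (-v) = -mapDomain f v :=
  map_neg (mapDomain.addMonoidHom f) v

lemma jC_pow_three : jC ^ 3 = 1 := by
  ext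
  simp only [jC, Units.val_pow_eq_pow_val, Units.val_mk0, Units.val_one, ← Complex.exp_nat_mul]
  rw [← Complex.exp_two_pi_mul_I]
  push_cast
  ring_nf

@[simp] lemma mul_jC_pow_three (u : ℂˣ) : (u * jC) ^ 3 = u ^ 3 := by
  rw [mul_pow, jC_pow_three, mul_one]

@[simp] lemma mul_jC_sq_pow_three (u : ℂˣ) : (u * jC ^ 2) ^ 3 = u ^ 3 := by
  rw [mul_pow, ← pow_mul, pow_mul', jC_pow_three, one_pow, mul_one]

def foldIndex (x : Fin 2 × ℂˣ) : Fin 2 × ℂˣ := (x.1, if x.1 = 0 then x.2 ^ 3 else x.2)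

/-- After folding, `Z_{1,b}` with `b³ = a³qⁿ` is recorded as `(0, n)` and `Z_{2,a³qⁿ}` as `(1, n)`. -/
def foldedIndex (q a : ℂˣ) (x : Fin 2 × ℕ) : Fin 2 × ℂˣ := (x.1, a ^ 3 * q ^ x.2)

lemma foldedIndex_injective {q : ℂˣ} (hq : ∀ n : ℕ, 0 < n → (q : ℂ) ^ n ≠ 1) (a : ℂˣ) :
    Function.Injective (foldedIndex q a) := by
  have hq' : orderOf q = 0 :=
    orderOf_eq_zero_iff'.mpr fun n hn h => hq n hn (by simpa using congrArg Units.val h)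
  rintro ⟨i, m⟩ ⟨j, n⟩ h
  simp only [foldedIndex, Prod.mk.injEq, mul_right_inj, pow_inj_iff_of_orderOf_eq_zero hq'] at h
  rw [h.1, h.2]

def foldedBox (β : BB) (p : ℕ) : (Fin 2 × ℕ) →₀ ℤ :=
  match β with
  | .b1 => single (0, 6 * p) 1
  | .b2 => -single (0, 6 * p + 6) 1 + single (1, 6 * p + 3) 1
  | .b3 => -single (1, 6 * p + 9) 1 + single (0, 6 * p + 6) 1 + single (0, 6 * p + 6) 1
  | .b4 => single (0, 6 * p + 6) 1 - single (0, 6 * p + 12) 1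
  | .b4' => single (0, 6 * p + 6) 1 - single (0, 6 * p + 12) 1
  | .b3' => -single (0, 6 * p + 12) 1 - single (0, 6 * p + 12) 1 + single (1, 6 * p + 9) 1
  | .b2' => single (0, 6 * p + 12) 1 - single (1, 6 * p + 15) 1
  | .b1' => -single (0, 6 * p + 18) 1

lemma mapDomain_foldIndex_box (q a : ℂˣ) (β : BB) (p : ℕ) :
    (box q β (a * q ^ (2 * p))).mapDomain foldIndex =
      (foldedBox β p).mapDomain (foldedIndex q a) := by
  cases β <;>
    simp only [box, foldedBox, Zv, mapDomain_add, mapDomain_sub, mapDomain_neg, mapDomain_single,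
      foldIndex, foldedIndex, if_true, Fin.one_eq_zero_iff, mul_jC_pow_three,
      mul_jC_sq_pow_three] <;>
    congr <;> ext <;> push_cast <;> ring

def BB.level (β : BB) : ℕ := 2 * β.rank + 3

lemma foldedBox_apply_nonpos (β : BB) (p : ℕ) (x : Fin 2 × ℕ) (hx : 6 * p + β.level ≤ x.2) :
    foldedBox β p x ≤ 0 := by
  obtain ⟨i, n⟩ := x
  cases β <;> simp only [foldedBox, BB.level, BB.rank] at hx ⊢ <;>
    simp only [Finsupp.add_apply, Finsupp.sub_apply, Finsupp.neg_apply, single_apply, Prod.mk.injEq] <;>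
    split_ifs <;> omega

lemma exists_foldedBox_apply_neg (β : BB) (hβ : β ≠ .b1) (p : ℕ) :
    ∃ x, 6 * p + β.level ≤ x.2 ∧ foldedBox β p x < 0 := by
  cases β
  case b1 => exact absurd rfl hβ
  case b2 => exact ⟨(0, 6 * p + 6), by simp [BB.level, BB.rank], by simp [foldedBox]⟩
  case b3 => exact ⟨(1, 6 * p + 9), by simp [BB.level, BB.rank], by simp [foldedBox]⟩
  case b4 => exact ⟨(0, 6 * p + 12), by simp [BB.level, BB.rank], by simp [foldedBox]⟩
  case b4' => exact ⟨(0, 6 * p + 12), by simp [BB.level, BB.rank], by simp [foldedBox]⟩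
  case b3' => exact ⟨(0, 6 * p + 12), by simp [BB.level, BB.rank], by simp [foldedBox]⟩
  case b2' => exact ⟨(1, 6 * p + 15), by simp [BB.level, BB.rank], by simp [foldedBox]⟩
  case b1' => exact ⟨(0, 6 * p + 18), by simp [BB.level, BB.rank], by simp [foldedBox]⟩

lemma BB.rank_le_of_le {x y : BB} (h : BB.le x y) : x.rank ≤ y.rank := by
  rcases h with rfl | h
  exacts [le_rfl, h.le]

lemma BB.rank_eq_zero_iff {x : BB} : x.rank = 0 ↔ x = .b1 := by
  cases x <;> simp [BB.rank]

lemma IsTab1.rank_le {k : ℕ} {T : Fin k → BB} (hT : IsTab1 k T) {p p' : Fin k} (h : p ≤ p') :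
    (T p).rank ≤ (T p').rank := by
  cases k with
  | zero => exact p.elim0
  | succ n =>
    have hmono : Monotone fun p => (T p).rank :=
      Fin.monotone_iff_le_succ.mpr fun i => BB.rank_le_of_le (hT i (Nat.succ_lt_succ i.isLt))
    exact hmono h

def foldedM1 {k : ℕ} (T : Fin k → BB) : (Fin 2 × ℕ) →₀ ℤ :=
  ∑ p : Fin k, foldedBox (T p) p

lemma mapDomain_foldIndex_m1 (q a : ℂˣ) {k : ℕ} (T : Fin k → BB) :
    (m1 q T a).mapDomain foldIndex = (foldedM1 T).mapDomain (foldedIndex q a) := by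
  simp only [m1, foldedM1, mapDomain_finsetSum, mapDomain_foldIndex_box]

lemma exists_foldedM1_apply_neg {k : ℕ} {T : Fin k → BB} (hT : IsTab1 k T) {p₀ : Fin k}
    (hp₀ : T p₀ ≠ .b1) : ∃ x, foldedM1 T x < 0 := by
  obtain ⟨n, rfl⟩ := Nat.exists_eq_add_one_of_ne_zero p₀.pos.ne'
  have hL : T (Fin.last n) ≠ .b1 := by
    have := hT.rank_le (Fin.le_last p₀)
    rw [Ne, ← BB.rank_eq_zero_iff] at hp₀ ⊢
    omega
  obtain ⟨x, hxL, hneg⟩ := exists_foldedBox_apply_neg (T (Fin.last n)) hL (Fin.last n)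
  have hnonpos : ∀ p, foldedBox (T p) p x ≤ 0 := fun p => by
    apply foldedBox_apply_nonpos
    have hrank := hT.rank_le (Fin.le_last p)
    have hp : (p : ℕ) ≤ n := Fin.le_last p
    simp only [BB.level, Fin.val_last] at hxL ⊢
    omega
  refine ⟨x, ?_⟩
  calc foldedM1 T x = ∑ p, foldedBox (T p) p x := finsetSum_apply _ _ _
    _ < ∑ _p, 0 := Finset.sum_lt_sum (fun p _ => hnonpos p) ⟨Fin.last n, Finset.mem_univ _, hneg⟩
    _ = 0 := Finset.sum_const_zero

lemma m1_of_forall_eq_b1 (q a : ℂˣ) {k : ℕ} {T : Fin k → BB} (h : ∀ p, T p = .b1) :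
    m1 q T a = ∑ p : Fin k, Zv 0 (a * q ^ (2 * (p : ℕ))) :=
  Finset.sum_congr rfl fun p _ => by rw [h p]; rfl

lemma sum_Zv_nonneg (q a : ℂˣ) (k : ℕ) : 0 ≤ ∑ p : Fin k, Zv 0 (a * q ^ (2 * (p : ℕ))) :=
  Finset.sum_nonneg fun _ _ => single_nonneg.mpr zero_le_one

lemma m1_nonneg_iff {q : ℂˣ} (hq : ∀ n : ℕ, 0 < n → (q : ℂ) ^ n ≠ 1) (a : ℂˣ) {k : ℕ}
    {T : Fin k → BB} (hT : IsTab1 k T) : 0 ≤ m1 q T a ↔ ∀ p, T p = .b1 := by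
  refine ⟨fun hdom => ?_, fun h => m1_of_forall_eq_b1 q a h ▸ sum_Zv_nonneg q a k⟩
  by_contra! ⟨p₀, hp₀⟩
  obtain ⟨x, hx⟩ := exists_foldedM1_apply_neg hT hp₀
  have hfold := mapDomain_nonneg (f := foldIndex) hdom (foldedIndex q a x)
  rw [mapDomain_foldIndex_m1, mapDomain_apply (foldedIndex_injective hq a)] at hfold
  exact hfold.not_gt hx

open Classical in
lemma S1_coeff (q : ℂˣ) (k : ℕ) (a : ℂˣ) (m : Mon2) :
    (S1 q k a).coeff m = ∑ T : Fin k → BB, if IsTab1 k T ∧ m1 q T a = m then 1 else 0 := by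
  rw [S1, AddMonoidAlgebra.coeff_sum, finsetSum_apply]
  refine Finset.sum_congr rfl fun T _ => ?_
  split_ifs <;> simp_all [AddMonoidAlgebra.coeff_single]

lemma S1_coeff_of_nonneg {q : ℂˣ} (hq : ∀ n : ℕ, 0 < n → (q : ℂ) ^ n ≠ 1) (k : ℕ) (a : ℂˣ)
    {m : Mon2} (hm : 0 ≤ m) :
    (S1 q k a).coeff m = if ∑ p : Fin k, Zv 0 (a * q ^ (2 * (p : ℕ))) = m then 1 else 0 := by
  classical
  have hiff : ∀ T : Fin k → BB, (IsTab1 k T ∧ m1 q T a = m) ↔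
      (T = fun _ => .b1) ∧ ∑ p : Fin k, Zv 0 (a * q ^ (2 * (p : ℕ))) = m := by
    refine fun T => ⟨fun ⟨hT, hTm⟩ => ?_, fun ⟨hT, hm⟩ => hT ▸ ⟨fun _ _ => Or.inl rfl, hm⟩⟩
    have hb1 := (m1_nonneg_iff hq a hT).mp (hTm ▸ hm)
    exact ⟨funext hb1, m1_of_forall_eq_b1 q a hb1 ▸ hTm⟩
  simp only [S1_coeff, hiff, ite_and, Finset.sum_ite_eq', Finset.mem_univ, if_true]

theorem W1_special_general (q : ℂˣ) (hq : ∀ n : ℕ, 0 < n → (q : ℂ) ^ n ≠ 1)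
    (k : ℕ) (a : ℂˣ) :
    (∀ T : Fin k → BB, IsTab1 k T →
      (((∀ lb : Fin 2 × ℂˣ, 0 ≤ (m1 q T a) lb) ↔ ∀ p : Fin k, T p = BB.b1) ∧
        ((∀ p : Fin k, T p = BB.b1) →
          m1 q T a = ∑ p : Fin k, Zv 0 (a * q ^ (2 * (p : ℕ))))))
    ∧ (S1 q k a).coeff (∑ p : Fin k, Zv 0 (a * q ^ (2 * (p : ℕ)))) = 1
    ∧ (∀ m : Mon2, (S1 q k a).coeff m ≠ 0 → (∀ lb : Fin 2 × ℂˣ, 0 ≤ m lb) →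
        m = ∑ p : Fin k, Zv 0 (a * q ^ (2 * (p : ℕ)))) := by
  refine ⟨fun T hT => ⟨m1_nonneg_iff hq a hT, m1_of_forall_eq_b1 q a⟩, ?_, fun m hm hdom => ?_⟩
  · rw [S1_coeff_of_nonneg hq k a (sum_Zv_nonneg q a k), if_pos rfl]
  · rw [S1_coeff_of_nonneg hq k a hdom] at hm
    exact ((Ne.ite_ne_right_iff one_ne_zero).mp hm).symm

/-- `m^{(1)}_{T,a}` is dominant iff `T = (1,…,1)`, in which case it is
`∏_p Z_{1,aq^{2(p-1)}}`; consequently the twisted q-character of the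
Kirillov–Reshetikhin module `W^{(1)}_{k,a}` of type `D₄⁽³⁾` has a unique dominant
monomial, occurring with coefficient `1` (the module is special). -/
theorem W1_special (q : ℂˣ) (hq : ∀ n : ℕ, 0 < n → (q : ℂ) ^ n ≠ 1)
    (k : ℕ) (hk : 1 ≤ k) (a : ℂˣ) :
    (∀ T : Fin k → BB, IsTab1 k T →
      (((∀ lb : Fin 2 × ℂˣ, 0 ≤ (m1 q T a) lb) ↔ ∀ p : Fin k, T p = BB.b1) ∧
        ((∀ p : Fin k, T p = BB.b1) →
          m1 q T a = ∑ p : Fin k, Zv 0 (a * q ^ (2 * (p : ℕ))))))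
    ∧ (S1 q k a).coeff (∑ p : Fin k, Zv 0 (a * q ^ (2 * (p : ℕ)))) = 1
    ∧ (∀ m : Mon2, (S1 q k a).coeff m ≠ 0 → (∀ lb : Fin 2 × ℂˣ, 0 ≤ m lb) →
        m = ∑ p : Fin k, Zv 0 (a * q ^ (2 * (p : ℕ)))) :=
  W1_special_general q hq k a
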